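/- arXiv:1506.09029 — 3 statements merged into one kernel-verified Lean document; each statement's English description precedes it below -/
import Mathlib

section
/- There exists a constant C > 0 such that for all r₀ ≥ 0 and all θ ∈ ℝ, the integral ∫_{-π}^{π} exp(-r₀(1 - cos(θ - θ₀))) dθ₀ is at most C/(1 + r₀^{1/2}). -/
open Real MeasureTheory

/-! The integrand depends on `θ - θ₀` only through a `2π`-periodic function, so the integral
does not depend on `θ`. It is at most `2π` because the integrand is at most `1`, and on `[-π, π]`
the bound `1 - cos u ≥ 2 u² / π²` dominates it by a Gaussian of variance `≍ 1 / r₀`, whose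
integral over `ℝ` is `√(π³ / (2 r₀))`. -/

theorem Function.Periodic.intervalIntegral_comp_sub_left {E : Type*} [NormedAddCommGroup E]
    [NormedSpace ℝ E] {f : ℝ → E} {T : ℝ} (hf : Function.Periodic f T) (θ a : ℝ) :
    ∫ x in a..a + T, f (θ - x) = ∫ x in a..a + T, f x := by
  rw [intervalIntegral.integral_comp_sub_left, show θ - a = θ - (a + T) + T by ring]
  exact hf.intervalIntegral_add_eq _ a

theorem intervalIntegral_exp_neg_mul_sq_le {a b c : ℝ} (hab : a ≤ b) (hc : 0 < c) :
    ∫ u in a..b, exp (-c * u ^ 2) ≤ √(π / c) := by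
  rw [intervalIntegral.integral_of_le hab, ← integral_gaussian]
  exact setIntegral_le_integral (integrable_exp_neg_mul_sq hc)
    (Filter.Eventually.of_forall fun u => (exp_pos _).le)

section VonMises

variable {r : ℝ}

theorem exp_neg_mul_one_sub_cos_le_one (hr : 0 ≤ r) (u : ℝ) :
    exp (-r * (1 - cos u)) ≤ 1 := by
  rw [exp_le_one_iff]
  nlinarith [cos_le_one u]

theorem exp_neg_mul_one_sub_cos_le_gaussian (hr : 0 ≤ r) {u : ℝ} (hu : |u| ≤ π) :
    exp (-r * (1 - cos u)) ≤ exp (-(2 / π ^ 2 * r) * u ^ 2) := by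
  rw [exp_le_exp]
  nlinarith [cos_le_one_sub_mul_cos_sq hu]

theorem integral_exp_neg_mul_one_sub_cos_le_two_pi (hr : 0 ≤ r) :
    ∫ u in -π..π, exp (-r * (1 - cos u)) ≤ 2 * π := by
  calc ∫ u in -π..π, exp (-r * (1 - cos u))
      ≤ ∫ _ in -π..π, (1 : ℝ) :=
        intervalIntegral.integral_mono_on (by linarith [pi_pos])
          (Continuous.intervalIntegrable (by fun_prop) _ _) intervalIntegrable_const
          fun u _ => exp_neg_mul_one_sub_cos_le_one hr u
    _ = 2 * π := by simp only [intervalIntegral.integral_const, smul_eq_mul, mul_one]; ring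

theorem integral_exp_neg_mul_one_sub_cos_mul_sqrt_le (hr : 0 ≤ r) :
    (∫ u in -π..π, exp (-r * (1 - cos u))) * √r ≤ √(π ^ 3 / 2) := by
  rcases hr.eq_or_lt with rfl | hr_pos
  · simp only [sqrt_zero, mul_zero]
    positivity
  have hc : 0 < 2 / π ^ 2 * r := by positivity
  have h_gauss : ∫ u in -π..π, exp (-r * (1 - cos u)) ≤ √(π / (2 / π ^ 2 * r)) :=
    calc ∫ u in -π..π, exp (-r * (1 - cos u))
        ≤ ∫ u in -π..π, exp (-(2 / π ^ 2 * r) * u ^ 2) :=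
          intervalIntegral.integral_mono_on (by linarith [pi_pos])
            (Continuous.intervalIntegrable (by fun_prop) _ _)
            (Continuous.intervalIntegrable (by fun_prop) _ _)
            fun u hu => exp_neg_mul_one_sub_cos_le_gaussian hr (abs_le.2 hu)
      _ ≤ √(π / (2 / π ^ 2 * r)) := intervalIntegral_exp_neg_mul_sq_le (by linarith [pi_pos]) hc
  calc (∫ u in -π..π, exp (-r * (1 - cos u))) * √r
      ≤ √(π / (2 / π ^ 2 * r)) * √r := by gcongr
    _ = √(π ^ 3 / 2) := by
      rw [← sqrt_mul (by positivity)]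
      congr 1
      field_simp

end VonMises

/-- There is C > 0 such that for all r₀ ≥ 0 and θ ∈ ℝ,
∫_{-π}^{π} exp(-r₀(1 - cos(θ - θ₀))) dθ₀ ≤ C / (1 + √r₀). -/
theorem stmt3 :
    ∃ C > 0, ∀ r₀ : ℝ, 0 ≤ r₀ → ∀ θ : ℝ,
      (∫ θ₀ in (-π)..π, Real.exp (-r₀ * (1 - Real.cos (θ - θ₀)))) ≤
        C / (1 + Real.sqrt r₀) := by
  refine ⟨2 * π + √(π ^ 3 / 2), by positivity, fun r₀ hr θ => ?_⟩
  have hper : Function.Periodic (fun u => exp (-r₀ * (1 - cos u))) (2 * π) := fun u => by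
    simp only [cos_add_two_pi]
  have h_shift := hper.intervalIntegral_comp_sub_left θ (-π)
  rw [show -π + 2 * π = π by ring] at h_shift
  rw [h_shift, le_div_iff₀ (by positivity), mul_add, mul_one]
  exact add_le_add (integral_exp_neg_mul_one_sub_cos_le_two_pi hr)
    (integral_exp_neg_mul_one_sub_cos_mul_sqrt_le hr)
end

section
/- With W(x,x₀) = (1/2π) e^{r - r₀} K₀(r₁) as above, there exists a constant C such that for all x ≠ x₀ with r₁ ≥ 1, the radial derivative satisfies |e_r · ∇_x W(x, x₀)| ≤ C r₁^{-3/2} e^{(r - r₁ - r₀)/2}. -/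
/-!
With `r₁ = ‖x - x₀‖` and `A = ⟪x - x₀, x⟫ / (r₁ ‖x‖)`, the radial derivative equals
`(1/2π) e^{r - r₀} (K₀(r₁) - A K₁(r₁))`, where `K₁ = -K₀'`. Writing
`K₀ - A K₁ = (1 - A) K₁ - (K₁ - K₀)`, it suffices to know `K₁ - K₀ ≲ e^{-s} s^{-3/2}` and
`K₁ ≲ e^{-s} s^{-1/2}`: both follow from `cosh t - 1 ≥ t² / 2`, which dominates the integrands by
Gaussians of width `s^{-1/2}`. The factor `1 - A` is controlled geometrically,
`(1 - A) r₁ ≤ δ := r₀ + r₁ - r`, and since `e^{r - r₀ - r₁} = e^{-δ}`, the resulting `δ e^{-δ}` is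
absorbed by `e^{-δ/2}`.
-/

open Real MeasureTheory

/-- The modified Bessel function of the second kind of order 0. -/
noncomputable def K0 (r : ℝ) : ℝ :=
  ∫ t in Set.Ioi (0 : ℝ), Real.exp (-r * Real.cosh t)

/-- The Green function W(x, x₀) = (1/2π) e^{‖x‖ - ‖x₀‖} K₀(‖x - x₀‖). -/
noncomputable def W (x x₀ : EuclideanSpace ℝ (Fin 2)) : ℝ :=
  (1 / (2 * π)) * Real.exp (‖x‖ - ‖x₀‖) * K0 ‖x - x₀‖

open Set
open scoped RealInnerProductSpace

noncomputable def K1 (r : ℝ) : ℝ :=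
  ∫ t in Ioi (0 : ℝ), cosh t * exp (-r * cosh t)

lemma sq_div_two_le_cosh_sub_one (t : ℝ) : t ^ 2 / 2 ≤ cosh t - 1 := by
  have hcosh : cosh t = 2 * sinh (t / 2) ^ 2 + 1 := by
    have h := cosh_two_mul (t / 2)
    rw [show 2 * (t / 2) = t by ring, cosh_sq] at h
    linarith
  have hsinh : (t / 2) ^ 2 ≤ sinh (t / 2) ^ 2 := by
    rw [sq_le_sq, abs_sinh]
    exact self_le_sinh_iff.2 (abs_nonneg _)
  linarith

lemma exp_neg_mul_cosh_le {s : ℝ} (hs : 0 ≤ s) (t : ℝ) :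
    exp (-s * cosh t) ≤ exp (-s) * exp (-(s / 4) * t ^ 2) := by
  rw [← exp_add, exp_le_exp]
  nlinarith [mul_le_mul_of_nonneg_left (sq_div_two_le_cosh_sub_one t) hs, sq_nonneg t]

lemma cosh_sub_one_mul_exp_neg_mul_cosh_le {s : ℝ} (hs : 0 < s) (t : ℝ) :
    (cosh t - 1) * exp (-s * cosh t) ≤ 2 / s * exp (-s) * exp (-(s / 4) * t ^ 2) := by
  have hu := sq_div_two_le_cosh_sub_one t
  have hsplit : exp (-s * cosh t) =
      exp (-(s / 2 * (cosh t - 1))) * exp (-(s / 2 * (cosh t - 1))) * exp (-s) := by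
    rw [← exp_add, ← exp_add]; ring_nf
  have hpeak : (cosh t - 1) * exp (-(s / 2 * (cosh t - 1))) ≤ 2 / s := by
    have hmax := mul_exp_neg_le_exp_neg_one (s / 2 * (cosh t - 1))
    have hexp_neg_one := exp_le_one_iff.2 (neg_nonpos.2 zero_le_one)
    calc (cosh t - 1) * exp (-(s / 2 * (cosh t - 1)))
        = 2 / s * (s / 2 * (cosh t - 1) * exp (-(s / 2 * (cosh t - 1)))) := by field_simp
      _ ≤ 2 / s := by
        apply mul_le_of_le_one_right (by positivity); linarith
  have htail : exp (-(s / 2 * (cosh t - 1))) ≤ exp (-(s / 4) * t ^ 2) := by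
    rw [exp_le_exp]
    nlinarith [mul_le_mul_of_nonneg_left hu hs.le]
  rw [hsplit, ← mul_assoc, ← mul_assoc, mul_right_comm _ _ (exp (-s))]
  gcongr

lemma integral_exp_neg_div_four_mul_sq_Ioi {s : ℝ} (hs : 0 < s) :
    ∫ t in Ioi (0 : ℝ), exp (-(s / 4) * t ^ 2) = √(π / s) := by
  rw [integral_gaussian_Ioi, show π / (s / 4) = 2 ^ 2 * (π / s) by field_simp; ring,
    sqrt_mul (by norm_num), sqrt_sq (by norm_num)]
  ring

lemma integrableOn_Ioi_of_le_gaussian {f : ℝ → ℝ} (hf : Continuous f) {s c : ℝ} (hs : 0 < s)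
    (h : ∀ t, ‖f t‖ ≤ c * exp (-(s / 4) * t ^ 2)) : IntegrableOn f (Ioi 0) :=
  ((integrable_exp_neg_mul_sq (by positivity : 0 < s / 4)).const_mul c).integrableOn.mono'
    hf.aestronglyMeasurable.restrict (Filter.Eventually.of_forall h)

lemma setIntegral_Ioi_le_of_le_gaussian {f : ℝ → ℝ} (hf : IntegrableOn f (Ioi 0)) {s c : ℝ}
    (hs : 0 < s) (h : ∀ t, f t ≤ c * exp (-(s / 4) * t ^ 2)) :
    ∫ t in Ioi 0, f t ≤ c * √(π / s) := by
  rw [← integral_exp_neg_div_four_mul_sq_Ioi hs, ← integral_const_mul]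
  exact setIntegral_mono_on hf
    ((integrable_exp_neg_mul_sq (by positivity : 0 < s / 4)).const_mul c).integrableOn
    measurableSet_Ioi fun t _ => h t

lemma integrableOn_exp_neg_mul_cosh {s : ℝ} (hs : 0 < s) :
    IntegrableOn (fun t => exp (-s * cosh t)) (Ioi 0) :=
  integrableOn_Ioi_of_le_gaussian (by fun_prop) hs fun t => by
    rw [norm_of_nonneg (exp_nonneg _)]; exact exp_neg_mul_cosh_le hs.le t

lemma integrableOn_cosh_sub_one_mul_exp_neg_mul_cosh {s : ℝ} (hs : 0 < s) :
    IntegrableOn (fun t => (cosh t - 1) * exp (-s * cosh t)) (Ioi 0) :=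
  integrableOn_Ioi_of_le_gaussian (by fun_prop) hs fun t => by
    rw [norm_of_nonneg (mul_nonneg (sub_nonneg.2 (one_le_cosh t)) (exp_nonneg _))]
    exact cosh_sub_one_mul_exp_neg_mul_cosh_le hs t

lemma integrableOn_cosh_mul_exp_neg_mul_cosh {s : ℝ} (hs : 0 < s) :
    IntegrableOn (fun t => cosh t * exp (-s * cosh t)) (Ioi 0) :=
  ((integrableOn_cosh_sub_one_mul_exp_neg_mul_cosh hs).add
    (integrableOn_exp_neg_mul_cosh hs)).congr_fun (fun t _ => by simp only [Pi.add_apply]; ring)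
    measurableSet_Ioi

lemma K1_sub_K0 {s : ℝ} (hs : 0 < s) :
    K1 s - K0 s = ∫ t in Ioi 0, (cosh t - 1) * exp (-s * cosh t) := by
  rw [K1, K0, ← integral_sub (integrableOn_cosh_mul_exp_neg_mul_cosh hs)
    (integrableOn_exp_neg_mul_cosh hs)]
  simp only [sub_one_mul]

lemma K0_le {s : ℝ} (hs : 0 < s) : K0 s ≤ exp (-s) * √(π / s) :=
  setIntegral_Ioi_le_of_le_gaussian (integrableOn_exp_neg_mul_cosh hs) hs
    (exp_neg_mul_cosh_le hs.le)

lemma K1_sub_K0_nonneg {s : ℝ} (hs : 0 < s) : 0 ≤ K1 s - K0 s := by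
  rw [K1_sub_K0 hs]
  exact setIntegral_nonneg measurableSet_Ioi fun t _ =>
    mul_nonneg (sub_nonneg.2 (one_le_cosh t)) (exp_nonneg _)

lemma K1_sub_K0_le {s : ℝ} (hs : 0 < s) : K1 s - K0 s ≤ 2 / s * exp (-s) * √(π / s) := by
  rw [K1_sub_K0 hs]
  exact setIntegral_Ioi_le_of_le_gaussian (integrableOn_cosh_sub_one_mul_exp_neg_mul_cosh hs) hs
    (cosh_sub_one_mul_exp_neg_mul_cosh_le hs)

lemma K1_nonneg (s : ℝ) : 0 ≤ K1 s :=
  setIntegral_nonneg measurableSet_Ioi fun t _ => by positivity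

lemma K1_le {s : ℝ} (hs : 1 ≤ s) : K1 s ≤ 3 * exp (-s) * √(π / s) := by
  have hs0 : 0 < s := by linarith
  have h2s : 2 / s ≤ 2 := div_le_self zero_le_two hs
  have hK0 := K0_le hs0
  have hdiff := K1_sub_K0_le hs0
  have hpos : 0 ≤ exp (-s) * √(π / s) := by positivity
  nlinarith

lemma hasDerivAt_K0 {r : ℝ} (hr : 0 < r) : HasDerivAt K0 (-K1 r) r := by
  have hball : Metric.ball r (r / 2) ∈ nhds r := Metric.ball_mem_nhds r (by linarith)
  have key := hasDerivAt_integral_of_dominated_loc_of_deriv_le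
    (F := fun s t => exp (-s * cosh t)) (F' := fun s t => -(cosh t * exp (-s * cosh t)))
    (μ := volume.restrict (Ioi 0)) (bound := fun t => cosh t * exp (-(r / 2) * cosh t))
    hball (Filter.Eventually.of_forall fun s => by fun_prop)
    (integrableOn_exp_neg_mul_cosh hr) (by fun_prop) ?_
    (integrableOn_cosh_mul_exp_neg_mul_cosh (by linarith)) ?_
  · rw [K1, ← integral_neg]
    exact key.2
  · refine Filter.Eventually.of_forall fun t s hs => ?_
    rw [Metric.mem_ball, Real.dist_eq, abs_lt] at hs
    rw [norm_neg, norm_of_nonneg (by positivity)]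
    gcongr
    nlinarith [one_le_cosh t]
  · refine Filter.Eventually.of_forall fun t s _ => ?_
    simpa [mul_comm] using ((hasDerivAt_mul_const (cosh t)).neg.exp)

section InnerProductSpace

variable {E : Type*} [NormedAddCommGroup E] [InnerProductSpace ℝ E]

lemma hasFDerivAt_norm_sub {x a : E} (h : x ≠ a) :
    HasFDerivAt (fun y => ‖y - a‖) (‖x - a‖⁻¹ • innerSL ℝ (x - a)) x := by
  have hsq := ((hasFDerivAt_id x).sub_const a).norm_sq
  have hne : ‖x - a‖ ^ 2 ≠ 0 := pow_ne_zero 2 (norm_ne_zero_iff.2 (sub_ne_zero.2 h))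
  convert hsq.sqrt hne using 1
  · ext y; simp [sqrt_sq (norm_nonneg _)]
  · ext v
    simp [sqrt_sq (norm_nonneg _)]
    field_simp

lemma norm_mul_norm_sub_inner_le (x y : E) :
    ‖x‖ * ‖y‖ - ⟪y, x⟫ ≤ ‖x‖ * (‖x - y‖ + ‖y‖ - ‖x‖) := by
  have hpol : 2 * ⟪y, x⟫ = ‖x‖ ^ 2 + ‖y‖ ^ 2 - ‖x - y‖ ^ 2 := by
    rw [norm_sub_sq_real, real_inner_comm]; ring
  have h1 := norm_sub_norm_le x y
  have h2 : ‖y‖ - ‖x‖ ≤ ‖x - y‖ := by rw [norm_sub_rev]; exact norm_sub_norm_le y x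
  have h3 := norm_sub_le x y
  nlinarith [mul_nonneg (by linarith : 0 ≤ ‖x - y‖ + ‖y‖ - ‖x‖)
    (by linarith : 0 ≤ ‖x‖ + ‖y‖ - ‖x - y‖)]

lemma one_sub_inner_div_norm_mul_norm_mul_norm_le {x : E} (hx : x ≠ 0) (y : E) :
    (1 - ⟪y, x⟫ / (‖y‖ * ‖x‖)) * ‖y‖ ≤ ‖x - y‖ + ‖y‖ - ‖x‖ := by
  rcases eq_or_ne y 0 with rfl | hy
  · simp
  have hx' : 0 < ‖x‖ := norm_pos_iff.2 hx
  have hy' : 0 < ‖y‖ := norm_pos_iff.2 hy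
  calc (1 - ⟪y, x⟫ / (‖y‖ * ‖x‖)) * ‖y‖ = (‖x‖ * ‖y‖ - ⟪y, x⟫) / ‖x‖ := by field_simp
    _ ≤ ‖x - y‖ + ‖y‖ - ‖x‖ := by
      rw [div_le_iff₀ hx']
      exact (norm_mul_norm_sub_inner_le x y).trans_eq (mul_comm _ _)

end InnerProductSpace

lemma fderiv_W_radial {x x₀ : EuclideanSpace ℝ (Fin 2)} (hx : x ≠ 0) (hne : x ≠ x₀) :
    fderiv ℝ (fun y => W y x₀) x (‖x‖⁻¹ • x) = 1 / (2 * π) * exp (‖x‖ - ‖x₀‖) *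
      (K0 ‖x - x₀‖ - ⟪x - x₀, x⟫ / (‖x - x₀‖ * ‖x‖) * K1 ‖x - x₀‖) := by
  have hexp := ((hasFDerivAt_norm_sub hx).sub_const ‖x₀‖).exp
  have hK0 := (hasDerivAt_K0 (norm_pos_iff.2 (sub_ne_zero.2 hne))).comp_hasFDerivAt x
    (hasFDerivAt_norm_sub hne)
  simp only [sub_zero] at hexp
  have hW : HasFDerivAt (fun y => W y x₀) _ x := ((hexp.mul hK0).const_mul (1 / (2 * π)))
    |>.congr_of_eventuallyEq (Filter.Eventually.of_forall fun y => mul_assoc _ _ _)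
  rw [hW.fderiv]
  simp only [FunLike.coe_smul, FunLike.coe_add, Pi.smul_apply,
    Pi.add_apply, innerSL_apply_apply, Function.comp_apply, smul_eq_mul, real_inner_smul_right,
    real_inner_self_eq_norm_sq]
  field_simp
  ring

lemma abs_K0_sub_mul_K1_le {s a : ℝ} (hs : 1 ≤ s) (ha : a ≤ 1) :
    |K0 s - a * K1 s| ≤ (2 + 3 * ((1 - a) * s)) * (exp (-s) * √(π / s) / s) := by
  have hs0 : 0 < s := by linarith
  have hK1 : (1 - a) * K1 s ≤ 3 * ((1 - a) * s) * (exp (-s) * √(π / s) / s) := by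
    calc (1 - a) * K1 s ≤ (1 - a) * (3 * exp (-s) * √(π / s)) :=
          mul_le_mul_of_nonneg_left (K1_le hs) (sub_nonneg.2 ha)
      _ = 3 * ((1 - a) * s) * (exp (-s) * √(π / s) / s) := by field_simp
  have hdiff : K1 s - K0 s ≤ 2 * (exp (-s) * √(π / s) / s) :=
    (K1_sub_K0_le hs0).trans_eq (by ring)
  have hK1_nonneg := mul_nonneg (sub_nonneg.2 ha) (K1_nonneg s)
  have hdiff_nonneg := K1_sub_K0_nonneg hs0
  rw [show K0 s - a * K1 s = (1 - a) * K1 s - (K1 s - K0 s) by ring, abs_sub_le_iff]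
  constructor <;> linarith

lemma two_add_three_mul_mul_exp_neg_le {δ : ℝ} (hδ : 0 ≤ δ) :
    (2 + 3 * δ) * exp (-δ) ≤ 8 * exp (-δ / 2) := by
  have hsq : exp (-δ) = exp (-δ / 2) * exp (-δ / 2) := by rw [← exp_add]; ring_nf
  have hpeak : δ / 2 * exp (-δ / 2) ≤ 1 := by
    rw [neg_div]
    exact (mul_exp_neg_le_exp_neg_one _).trans (exp_le_one_iff.2 (by norm_num))
  have hle : exp (-δ / 2) ≤ 1 := exp_le_one_iff.2 (by linarith)
  rw [hsq]
  nlinarith [exp_pos (-δ / 2)]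

lemma sqrt_pi_div_div_eq_rpow {s : ℝ} (hs : 0 < s) :
    √(π / s) / s = √π * s ^ (-(3 / 2 : ℝ)) := by
  rw [sqrt_div' _ hs.le, rpow_neg hs.le, show (3 / 2 : ℝ) = 1 + 1 / 2 by norm_num,
    rpow_add hs, rpow_one, ← sqrt_eq_rpow]
  field_simp

/-- There is C such that for all x ≠ x₀ with x ≠ 0 and r₁ = ‖x - x₀‖ ≥ 1,
|e_r · ∇_x W(x,x₀)| ≤ C r₁^{-3/2} e^{(r - r₁ - r₀)/2}. -/
theorem stmt11 :
    ∃ C : ℝ, ∀ x x₀ : EuclideanSpace ℝ (Fin 2), x ≠ x₀ → x ≠ 0 →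
      1 ≤ ‖x - x₀‖ →
      |fderiv ℝ (fun y => W y x₀) x ((‖x‖)⁻¹ • x)| ≤
        C * ‖x - x₀‖ ^ (-(3 / 2 : ℝ)) *
          Real.exp ((‖x‖ - ‖x - x₀‖ - ‖x₀‖) / 2) := by
  refine ⟨4 / √π, fun x x₀ hne hx h1 => ?_⟩
  set r₁ := ‖x - x₀‖
  set A := ⟪x - x₀, x⟫ / (r₁ * ‖x‖)
  set δ := ‖x₀‖ + r₁ - ‖x‖
  have hA : A ≤ 1 := (abs_le.1 (abs_real_inner_div_norm_mul_norm_le_one _ _)).2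
  have hAδ : (1 - A) * r₁ ≤ δ := by
    simpa only [sub_sub_cancel] using one_sub_inner_div_norm_mul_norm_mul_norm_le hx (x - x₀)
  have hδ : 0 ≤ δ := by linarith [norm_sub_norm_le x x₀]
  have hexp : exp (‖x‖ - ‖x₀‖) * exp (-r₁) = exp (-δ) := by
    rw [← exp_add]; simp only [δ]; ring_nf
  rw [fderiv_W_radial hx hne, abs_mul, abs_of_pos (by positivity)]
  calc 1 / (2 * π) * exp (‖x‖ - ‖x₀‖) * |K0 r₁ - A * K1 r₁|
      ≤ 1 / (2 * π) * exp (‖x‖ - ‖x₀‖) * ((2 + 3 * δ) * (exp (-r₁) * √(π / r₁) / r₁)) := by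
        gcongr
        exact (abs_K0_sub_mul_K1_le h1 hA).trans (by gcongr)
    _ = 1 / (2 * √π) * r₁ ^ (-(3 / 2 : ℝ)) * ((2 + 3 * δ) * exp (-δ)) := by
        rw [mul_div_assoc, sqrt_pi_div_div_eq_rpow (by linarith), ← hexp]
        field_simp
        rw [sq_sqrt pi_pos.le]
    _ ≤ 1 / (2 * √π) * r₁ ^ (-(3 / 2 : ℝ)) * (8 * exp (-δ / 2)) :=
        mul_le_mul_of_nonneg_left (two_add_three_mul_mul_exp_neg_le hδ) (by positivity)
    _ = 4 / √π * r₁ ^ (-(3 / 2 : ℝ)) * exp ((‖x‖ - r₁ - ‖x₀‖) / 2) := by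
        rw [show (‖x‖ - r₁ - ‖x₀‖) / 2 = -δ / 2 by ring]
        ring
end

section
/- Let G(x) = (1/2π) e^{r cos θ} K₀(r) in polar coordinates (r, θ) on ℝ² \ {0}, the fundamental solution of the scalar Oseen operator Δ - 2∂₁. Then G satisfies ΔG - 2 ∂₁ G = 0 on ℝ² \ {0}. -/
open Real MeasureTheory

/-- The Laplacian of a function on the Euclidean plane, as the sum of the
second partial derivatives in the two Cartesian coordinate directions. -/
noncomputable def laplacian (f : EuclideanSpace ℝ (Fin 2) → ℝ)
    (x : EuclideanSpace ℝ (Fin 2)) : ℝ :=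
  ∑ i : Fin 2, fderiv ℝ (fun y => fderiv ℝ f y (EuclideanSpace.single i 1)) x
    (EuclideanSpace.single i 1)

/-!
Conjugating by `e^{x₁}` turns the Oseen operator into `Δ - 1`:
`Δ(e^{x₁} w) - 2 ∂₁(e^{x₁} w) = e^{x₁} (Δw - w)`. For a radial `w = f(‖x‖)` in the plane,
`Δw = f'' + f'/r`, so the claim reduces to the modified Bessel equation `K₀'' + K₀'/r - K₀ = 0`.
Differentiating `K₀(r) = ∫₀^∞ e^{-r cosh t} dt` under the integral sign gives
`K₀^{(n)}(r) = (-1)^n ∫₀^∞ coshⁿ t e^{-r cosh t} dt`, and the Bessel equation is the statement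
that `(sinh t e^{-r cosh t})' = (cosh t - r sinh² t) e^{-r cosh t}` integrates to zero over `(0, ∞)`.
-/

open Set Filter Topology
open scoped Nat

noncomputable def K0Moment (n : ℕ) (r : ℝ) : ℝ :=
  ∫ t in Ioi 0, cosh t ^ n * exp (-r * cosh t)

lemma K0_eq_K0Moment_zero : K0 = K0Moment 0 := by
  funext r
  simp [K0, K0Moment]

lemma self_le_cosh {t : ℝ} (ht : 0 ≤ t) : t ≤ cosh t :=
  (self_le_sinh_iff.2 ht).trans (sinh_lt_cosh t).le

lemma cosh_pow_mul_exp_neg_le (n : ℕ) {c r t : ℝ} (hc : 0 < c) (hcr : c ≤ r) (ht : 0 ≤ t) :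
    cosh t ^ n * exp (-r * cosh t) ≤ n ! * (2 / c) ^ n * exp (-(c / 2) * t) := by
  have hpow : cosh t ^ n ≤ n ! * (2 / c) ^ n * exp (c / 2 * cosh t) := by
    have h := pow_div_factorial_le_exp (x := c / 2 * cosh t) (by positivity) n
    rw [div_le_iff₀ (by positivity), mul_pow] at h
    calc cosh t ^ n = (2 / c) ^ n * ((c / 2) ^ n * cosh t ^ n) := by
          rw [← mul_assoc, ← mul_pow, show 2 / c * (c / 2) = 1 by field_simp, one_pow, one_mul]
      _ ≤ (2 / c) ^ n * (exp (c / 2 * cosh t) * n !) := by gcongr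
      _ = _ := by ring
  have hexp : exp (c / 2 * cosh t) * exp (-r * cosh t) ≤ exp (-(c / 2) * t) := by
    rw [← exp_add]
    gcongr
    nlinarith [self_le_cosh ht, one_le_cosh t]
  calc cosh t ^ n * exp (-r * cosh t)
      ≤ n ! * (2 / c) ^ n * exp (c / 2 * cosh t) * exp (-r * cosh t) := by gcongr
    _ ≤ n ! * (2 / c) ^ n * exp (-(c / 2) * t) := by rw [mul_assoc]; gcongr

lemma continuous_cosh_pow_mul_exp (n : ℕ) (r : ℝ) :
    Continuous fun t => cosh t ^ n * exp (-r * cosh t) := by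
  fun_prop

lemma integrableOn_cosh_pow_mul_exp (n : ℕ) {r : ℝ} (hr : 0 < r) :
    IntegrableOn (fun t => cosh t ^ n * exp (-r * cosh t)) (Ioi 0) := by
  refine ((exp_neg_integrableOn_Ioi 0 (half_pos hr)).const_mul (n ! * (2 / r) ^ n)).mono'
    (continuous_cosh_pow_mul_exp n r).aestronglyMeasurable ?_
  filter_upwards [ae_restrict_mem measurableSet_Ioi] with t ht
  rw [norm_of_nonneg (by positivity)]
  exact cosh_pow_mul_exp_neg_le n hr le_rfl (le_of_lt ht)

lemma hasDerivAt_K0Moment (n : ℕ) {r : ℝ} (hr : 0 < r) :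
    HasDerivAt (K0Moment n) (-K0Moment (n + 1) r) r := by
  have hball : Metric.ball r (r / 2) ∈ 𝓝 r := Metric.ball_mem_nhds r (half_pos hr)
  have hderiv := hasDerivAt_integral_of_dominated_loc_of_deriv_le (μ := volume.restrict (Ioi 0))
    (F := fun s t => cosh t ^ n * exp (-s * cosh t))
    (F' := fun s t => -(cosh t ^ (n + 1) * exp (-s * cosh t)))
    (bound := fun t => (n + 1)! * (2 / (r / 2)) ^ (n + 1) * exp (-(r / 2 / 2) * t)) hball
    (.of_forall fun s => (continuous_cosh_pow_mul_exp n s).aestronglyMeasurable)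
    (integrableOn_cosh_pow_mul_exp n hr)
    (continuous_cosh_pow_mul_exp (n + 1) r).neg.aestronglyMeasurable ?_
    ((exp_neg_integrableOn_Ioi 0 (by positivity)).const_mul _) ?_
  · have h := hderiv.2
    rw [integral_neg] at h
    exact h
  · filter_upwards [ae_restrict_mem measurableSet_Ioi] with t ht s hs
    rw [Metric.mem_ball, Real.dist_eq, abs_lt] at hs
    rw [norm_neg, norm_of_nonneg (by positivity)]
    exact cosh_pow_mul_exp_neg_le (n + 1) (half_pos hr) (by linarith) (le_of_lt ht)
  · refine .of_forall fun t s _ => ?_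
    exact (((hasDerivAt_id s).neg.mul_const (cosh t)).exp.const_mul (cosh t ^ n)).congr_deriv
      (by simp only [Pi.neg_apply, id_eq, pow_succ]; ring)

lemma K0Moment_two {r : ℝ} (hr : 0 < r) : K0Moment 2 r = K0Moment 0 r + K0Moment 1 r / r := by
  set g : ℕ → ℝ → ℝ := fun n t => cosh t ^ n * exp (-r * cosh t)
  have hint (n : ℕ) : IntegrableOn (g n) (Ioi 0) := integrableOn_cosh_pow_mul_exp n hr
  -- `g 2 t - g 0 t = sinh t ^ 2 * exp (-r * cosh t)`
  have hderiv (t : ℝ) : HasDerivAt (fun t => sinh t * exp (-r * cosh t))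
      (g 1 t - r * (g 2 t - g 0 t)) t := by
    refine ((hasDerivAt_sinh t).mul ((hasDerivAt_cosh t).const_mul (-r)).exp).congr_deriv ?_
    simp only [g]
    linear_combination (-r * exp (-r * cosh t)) * sinh_sq t
  have hint_sinh_sq : IntegrableOn (fun t => r * (g 2 t - g 0 t)) (Ioi 0) :=
    ((hint 2).sub (hint 0)).const_mul r
  have hint_deriv : IntegrableOn (fun t => g 1 t - r * (g 2 t - g 0 t)) (Ioi 0) :=
    (hint 1).sub hint_sinh_sq
  have hint_sinh : IntegrableOn (fun t => sinh t * exp (-r * cosh t)) (Ioi 0) := by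
    refine (hint 1).mono' ((continuous_sinh.mul (by fun_prop)).aestronglyMeasurable) ?_
    refine .of_forall fun t => ?_
    rw [norm_mul, norm_of_nonneg (exp_pos _).le, Real.norm_eq_abs, abs_sinh]
    simp only [g, pow_one]
    gcongr
    exact (sinh_lt_cosh _).le.trans_eq (cosh_abs t)
  have hlim := tendsto_zero_of_hasDerivAt_of_integrableOn_Ioi (fun t _ => hderiv t) hint_deriv
    hint_sinh
  have h := integral_Ioi_of_hasDerivAt_of_tendsto' (fun t _ => hderiv t) hint_deriv hlim
  rw [sinh_zero, zero_mul, sub_zero, integral_sub (hint 1) hint_sinh_sq,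
    integral_const_mul, integral_sub (hint 2) (hint 0)] at h
  change K0Moment 1 r - r * (K0Moment 2 r - K0Moment 0 r) = 0 at h
  field_simp
  linear_combination -h

section InnerProductSpace

variable {E : Type*} [NormedAddCommGroup E] [InnerProductSpace ℝ E]

lemma hasFDerivAt_norm_of_ne_zero {x : E} (hx : x ≠ 0) :
    HasFDerivAt (fun y : E => ‖y‖) (‖x‖⁻¹ • innerSL ℝ x) x := by
  have h := (hasStrictFDerivAt_norm_sq x).hasFDerivAt.sqrt (pow_ne_zero 2 (norm_ne_zero_iff.2 hx))
  simp only [sqrt_sq (norm_nonneg _)] at h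
  convert h using 1
  ext v
  simp only [smul_apply, innerSL_apply_apply, smul_eq_mul, nsmul_eq_mul, Nat.cast_ofNat]
  field_simp

lemma hasFDerivAt_comp_norm {f : ℝ → ℝ} {f' : ℝ} {x : E} (hf : HasDerivAt f f' ‖x‖)
    (hx : x ≠ 0) : HasFDerivAt (fun y => f ‖y‖) ((f' / ‖x‖) • innerSL ℝ x) x := by
  refine (hf.comp_hasFDerivAt x (hasFDerivAt_norm_of_ne_zero hx)).congr_fderiv ?_
  rw [smul_smul, div_eq_mul_inv]

lemma eventually_hasFDerivAt_comp_norm {f f' : ℝ → ℝ} (hf : ∀ r, 0 < r → HasDerivAt f (f' r) r)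
    {x : E} (hx : x ≠ 0) :
    ∀ᶠ y in 𝓝 x, HasFDerivAt (fun z => f ‖z‖) ((f' ‖y‖ / ‖y‖) • innerSL ℝ y) y := by
  filter_upwards [isOpen_ne.mem_nhds hx] with y hy
  exact hasFDerivAt_comp_norm (hf _ (norm_pos_iff.2 hy)) hy

lemma hasFDerivAt_fderiv_comp_norm_apply {f f' : ℝ → ℝ} {f'' : ℝ}
    (hf : ∀ r, 0 < r → HasDerivAt f (f' r) r) {x : E} (hx : x ≠ 0) (hf' : HasDerivAt f' f'' ‖x‖)
    (v : E) :
    HasFDerivAt (fun y => fderiv ℝ (fun z => f ‖z‖) y v)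
      (((f'' - f' ‖x‖ / ‖x‖) * inner ℝ x v / ‖x‖ ^ 2) • innerSL ℝ x +
        (f' ‖x‖ / ‖x‖) • innerSL ℝ v) x := by
  have hr : ‖x‖ ≠ 0 := norm_ne_zero_iff.2 hx
  have heq : (fun y => fderiv ℝ (fun z => f ‖z‖) y v) =ᶠ[𝓝 x]
      fun y => f' ‖y‖ / ‖y‖ * innerSL ℝ v y := by
    filter_upwards [eventually_hasFDerivAt_comp_norm hf hx] with y hy
    rw [hy.fderiv, smul_apply, innerSL_apply_apply, innerSL_apply_apply,
      real_inner_comm, smul_eq_mul]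
  have hquot := hasFDerivAt_comp_norm (hf'.div (hasDerivAt_id _) hr) hx
  refine ((hquot.fun_mul (innerSL ℝ v).hasFDerivAt).congr_of_eventuallyEq heq).congr_fderiv ?_
  ext w
  simp only [add_apply, smul_apply, innerSL_apply_apply, smul_eq_mul, Pi.div_apply, id_eq,
    real_inner_comm v x]
  field_simp
  ring

lemma fderiv_fderiv_comp_norm_apply {f f' : ℝ → ℝ} {f'' : ℝ}
    (hf : ∀ r, 0 < r → HasDerivAt f (f' r) r) {x : E} (hx : x ≠ 0) (hf' : HasDerivAt f' f'' ‖x‖)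
    (v : E) :
    fderiv ℝ (fun y => fderiv ℝ (fun z => f ‖z‖) y v) x v =
      (f'' - f' ‖x‖ / ‖x‖) * inner ℝ x v ^ 2 / ‖x‖ ^ 2 + f' ‖x‖ / ‖x‖ * ‖v‖ ^ 2 := by
  rw [(hasFDerivAt_fderiv_comp_norm_apply hf hx hf' v).fderiv]
  simp only [add_apply, smul_apply, innerSL_apply_apply, smul_eq_mul, real_inner_self_eq_norm_sq]
  ring

lemma fderiv_fderiv_mul_apply {u w : E → ℝ} {x v : E}
    (hu : ∀ᶠ y in 𝓝 x, DifferentiableAt ℝ u y) (hw : ∀ᶠ y in 𝓝 x, DifferentiableAt ℝ w y)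
    (hu' : DifferentiableAt ℝ (fun y => fderiv ℝ u y v) x)
    (hw' : DifferentiableAt ℝ (fun y => fderiv ℝ w y v) x) :
    fderiv ℝ (fun y => fderiv ℝ (fun z => u z * w z) y v) x v =
      fderiv ℝ (fun y => fderiv ℝ u y v) x v * w x + 2 * (fderiv ℝ u x v * fderiv ℝ w x v) +
        u x * fderiv ℝ (fun y => fderiv ℝ w y v) x v := by
  have heq : (fun y => fderiv ℝ (fun z => u z * w z) y v) =ᶠ[𝓝 x]
      fun y => u y * fderiv ℝ w y v + w y * fderiv ℝ u y v := by
    filter_upwards [hu, hw] with y huy hwy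
    rw [fderiv_fun_mul huy hwy]
    rfl
  have hdiff := ((hu.self_of_nhds.hasFDerivAt.fun_mul hw'.hasFDerivAt).fun_add
    (hw.self_of_nhds.hasFDerivAt.fun_mul hu'.hasFDerivAt))
  rw [heq.fderiv_eq, hdiff.fderiv]
  simp only [add_apply, smul_apply, smul_eq_mul]
  ring

lemma fderiv_exp_comp_clm (ℓ : E →L[ℝ] ℝ) (x : E) :
    fderiv ℝ (fun y => exp (ℓ y)) x = exp (ℓ x) • ℓ :=
  (ℓ.hasFDerivAt.exp).fderiv

lemma hasFDerivAt_fderiv_exp_comp_clm_apply (ℓ : E →L[ℝ] ℝ) (x v : E) :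
    HasFDerivAt (fun y => fderiv ℝ (fun z => exp (ℓ z)) y v) ((ℓ v * exp (ℓ x)) • ℓ) x := by
  simp only [fderiv_exp_comp_clm, smul_apply, smul_eq_mul]
  exact (ℓ.hasFDerivAt.exp.mul_const (ℓ v)).congr_fderiv (by rw [smul_smul, mul_comm])

end InnerProductSpace

section Plane

variable {x : EuclideanSpace ℝ (Fin 2)}

lemma laplacian_comp_norm {f f' : ℝ → ℝ} {f'' : ℝ} (hf : ∀ r, 0 < r → HasDerivAt f (f' r) r)
    (hx : x ≠ 0) (hf' : HasDerivAt f' f'' ‖x‖) :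
    laplacian (fun y => f ‖y‖) x = f'' + f' ‖x‖ / ‖x‖ := by
  have hr : ‖x‖ ≠ 0 := norm_ne_zero_iff.2 hx
  have hnorm : ‖x‖ ^ 2 = x 0 ^ 2 + x 1 ^ 2 := by
    rw [EuclideanSpace.real_norm_sq_eq, Fin.sum_univ_two]
  simp only [laplacian, Fin.sum_univ_two, fderiv_fderiv_comp_norm_apply hf hx hf',
    EuclideanSpace.inner_single_right, PiLp.norm_single, one_mul, conj_trivial, norm_one, one_pow]
  field_simp
  linear_combination (f' ‖x‖ - f'' * ‖x‖) * hnorm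

lemma laplacian_exp_mul_sub_two_fderiv {w : EuclideanSpace ℝ (Fin 2) → ℝ}
    (hw : ∀ᶠ y in 𝓝 x, DifferentiableAt ℝ w y)
    (hw' : ∀ v, DifferentiableAt ℝ (fun y => fderiv ℝ w y v) x) :
    laplacian (fun y => exp (y 0) * w y) x -
        2 * fderiv ℝ (fun y => exp (y 0) * w y) x (EuclideanSpace.single 0 1) =
      exp (x 0) * (laplacian w x - w x) := by
  set ℓ := EuclideanSpace.proj (𝕜 := ℝ) (0 : Fin 2)
  have hℓ (y : EuclideanSpace ℝ (Fin 2)) : y 0 = ℓ y := rfl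
  have hu : ∀ᶠ y in 𝓝 x, DifferentiableAt ℝ (fun z => exp (ℓ z)) y :=
    .of_forall fun y => ℓ.hasFDerivAt.exp.differentiableAt
  have hu' (v : EuclideanSpace ℝ (Fin 2)) :=
    (hasFDerivAt_fderiv_exp_comp_clm_apply ℓ x v).differentiableAt
  simp only [laplacian, Fin.sum_univ_two, hℓ]
  rw [fderiv_fderiv_mul_apply hu hw (hu' _) (hw' _), fderiv_fderiv_mul_apply hu hw (hu' _) (hw' _),
    (hasFDerivAt_fderiv_exp_comp_clm_apply ℓ x _).fderiv,
    (hasFDerivAt_fderiv_exp_comp_clm_apply ℓ x _).fderiv,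
    fderiv_fun_mul hu.self_of_nhds hw.self_of_nhds, fderiv_exp_comp_clm]
  simp only [ℓ, PiLp.proj_apply, PiLp.single_eq_same, Fin.isValue, ne_eq, zero_ne_one,
    not_false_eq_true, PiLp.single_eq_of_ne, smul_apply, add_apply, smul_eq_mul]
  ring

end Plane

/-- The fundamental solution G(x) = (1/2π) e^{r cos θ} K₀(r) = (1/2π) e^{x₁} K₀(‖x‖)
of the scalar Oseen operator satisfies ΔG - 2 ∂₁ G = 0 on ℝ² \ {0}. -/
theorem stmt18 (x : EuclideanSpace ℝ (Fin 2)) (hx : x ≠ 0) :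
    laplacian (fun y => (1 / (2 * π)) * Real.exp (y 0) * K0 ‖y‖) x -
      2 * fderiv ℝ (fun y => (1 / (2 * π)) * Real.exp (y 0) * K0 ‖y‖) x
        (EuclideanSpace.single 0 1) = 0 := by
  set c := 1 / (2 * π)
  have hr : 0 < ‖x‖ := norm_pos_iff.2 hx
  have hf (r : ℝ) (hr' : 0 < r) :
      HasDerivAt (fun r => c * K0 r) (-(c * K0Moment 1 r)) r := by
    simpa [K0_eq_K0Moment_zero] using (hasDerivAt_K0Moment 0 hr').const_mul c
  have hf' : HasDerivAt (fun r => -(c * K0Moment 1 r)) (c * K0Moment 2 ‖x‖) ‖x‖ := by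
    simpa using ((hasDerivAt_K0Moment 1 hr).const_mul c).fun_neg
  have hw := eventually_hasFDerivAt_comp_norm hf hx
  have hG : (fun y : EuclideanSpace ℝ (Fin 2) => c * exp (y 0) * K0 ‖y‖) =
      fun y => exp (y 0) * (c * K0 ‖y‖) := by
    ext y
    ring
  rw [hG, laplacian_exp_mul_sub_two_fderiv (hw.mono fun y hy => hy.differentiableAt)
    (fun v => (hasFDerivAt_fderiv_comp_norm_apply hf hx hf' v).differentiableAt),
    laplacian_comp_norm hf hx hf', K0Moment_two hr, K0_eq_K0Moment_zero]
  field_simp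
  ring
end
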